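/- Let (X,r) be a finite left non-degenerate idempotent solution, u ∈ Λ, X_u = {x ∈ X : λ_{dx}(u) = x}, and t_{u,x} = (dx, λ_{dx}) ∘ c_u^{-1} ∈ G_u. Then T(G_u) = {t_{u,x} : x ∈ X_u}, t_{u,u} is the identity of T(G_u), the map x ↦ t_{u,x} is injective on X_u (so |T(G_u)| = |X_u|), t_{u,x} ∘ t_{u,y} = t_{u, λ_{dx}(y)}, and the order of each t_{u,x} divides d. -/

import Mathlib

open Function

variable {X : Type*}

def lam (r : X × X → X × X) (x y : X) : X := (r (x, y)).1

def rho (r : X × X → X × X) (y x : X) : X := (r (x, y)).2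

/-- `r × id` acting on triples. -/
def rl (r : X × X → X × X) : X × X × X → X × X × X :=
  fun p => ((r (p.1, p.2.1)).1, (r (p.1, p.2.1)).2, p.2.2)

/-- `id × r` acting on triples. -/
def rr (r : X × X → X × X) : X × X × X → X × X × X :=
  fun p => (p.1, r (p.2.1, p.2.2))

/-- the Yang–Baxter (braid) equation for a set-theoretic map. -/
def YB (r : X × X → X × X) : Prop :=
  rl r ∘ rr r ∘ rl r = rr r ∘ rl r ∘ rr r

/-- the relation `x + y = y + y` on the free monoid. -/
def simpleRel (X : Type*) : FreeMonoid X → FreeMonoid X → Prop :=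
  fun a b => ∃ x y : X, a = FreeMonoid.of x * FreeMonoid.of y ∧
    b = FreeMonoid.of y * FreeMonoid.of y

/-- the derived structure monoid `A(X,r)` of a left non-degenerate idempotent solution. -/
abbrev DerMon (X : Type*) := (conGen (simpleRel X)).Quotient

def dof (x : X) : DerMon X := (conGen (simpleRel X)).mk' (FreeMonoid.of x)

/-- the diagonal map `q(x) = λ_x⁻¹(x)`. -/
def qmap (L : DerMon X → Equiv.Perm X) (x : X) : X := (L (dof x))⁻¹ x

/-- the product of the structure semigroup realised on pairs `(a, λ_a)`. -/
def sop (L : DerMon X → Equiv.Perm X) (act : Equiv.Perm X → DerMon X →* DerMon X)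
    (a b : DerMon X) : DerMon X := a * act (L a) b

/-- the component `S_u = {(a,λ_a) : λ_a⁻¹(a) = |a|·u}`. -/
def Su (L : DerMon X → Equiv.Perm X) (act : Equiv.Perm X → DerMon X →* DerMon X)
    (len : DerMon X → ℕ) (u : X) : Set (DerMon X) :=
  {a | a ≠ 1 ∧ act (L a)⁻¹ a = dof u ^ len a}

/-- `X_u = {x ∈ X : λ_{dx}(u) = x}`. -/
def Xu (L : DerMon X → Equiv.Perm X) (d : ℕ) (u : X) : Set X :=
  {x | L (dof x ^ d) u = x}

/-- `φ : S(X,r) → G` realises `G` as the group of quotients `S_u ∘ ⟨c_u⟩⁻¹` of the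
cancellative semigroup `S_u`. -/
def IsQuotGroup {X : Type*} {G : Type*} [Group G]
    (op : DerMon X → DerMon X → DerMon X) (S : Set (DerMon X)) (cu : DerMon X)
    (φ : DerMon X → G) : Prop :=
  (∀ a ∈ S, ∀ b ∈ S, φ (op a b) = φ a * φ b) ∧
  (∀ a ∈ S, ∀ b ∈ S, φ a = φ b → a = b) ∧
  (∀ g : G, ∃ a ∈ S, ∃ n : ℕ, g = φ a * (φ cu)⁻¹ ^ n)


section AuxMonoid

variable {X : Type*}

/-- auxiliary "last letter" monoid: `a * b = b` unless `b = 1`. -/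
structure RO (X : Type*) where val : Option X

instance : Monoid (RO X) where
  mul a b := ⟨b.val.elim a.val some⟩
  one := ⟨none⟩
  mul_assoc a b c := by obtain ⟨_ | c⟩ := c <;> rfl
  one_mul a := by obtain ⟨_ | a⟩ := a <;> rfl
  mul_one a := rfl

lemma RO.mul_some (a : RO X) (x : X) : a * ⟨some x⟩ = ⟨some x⟩ := rfl

def lastHom : DerMon X →* RO X :=
  (conGen (simpleRel X)).lift (FreeMonoid.lift fun x => (⟨some x⟩ : RO X))
    (Con.conGen_le.mpr (by
      rintro a b ⟨x, y, rfl, rfl⟩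
      simp only [Con.ker_rel, map_mul, FreeMonoid.lift_eval_of]
      rfl))

lemma lastHom_dof (x : X) : lastHom (dof x) = ⟨some x⟩ := by
  exact (Con.lift_mk' _ (FreeMonoid.of x)).trans (FreeMonoid.lift_eval_of _ _)

lemma lastHom_dof_pow (x : X) (n : ℕ) : lastHom ((dof x) ^ (n+1)) = ⟨some x⟩ := by
  rw [map_pow, lastHom_dof]
  induction n with
  | zero => rw [pow_one]
  | succ k ih => rw [pow_succ, ih, RO.mul_some]

lemma dof_mul_dof (x y : X) : dof x * dof y = dof y * dof y := by
  have h : (conGen (simpleRel X)) (FreeMonoid.of x * FreeMonoid.of y)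
      (FreeMonoid.of y * FreeMonoid.of y) := ConGen.Rel.of _ _ ⟨x, y, rfl, rfl⟩
  have h2 := (Con.eq _).mpr h
  simpa [dof, map_mul, Con.mk', MonoidHom.coe_mk] using h2

lemma dof_absorb (x y : X) (k : ℕ) : dof x * dof y ^ (k+1) = dof y ^ (k+2) := by
  calc dof x * dof y ^ (k+1) = dof x * (dof y * dof y ^ k) := by rw [pow_succ']
  _ = (dof x * dof y) * dof y ^ k := (mul_assoc _ _ _).symm
  _ = (dof y * dof y) * dof y ^ k := by rw [dof_mul_dof]
  _ = dof y ^ (k+2) := by rw [mul_assoc, ← pow_succ', ← pow_succ']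

lemma dof_pow_mul (x y : X) (m : ℕ) : ∀ k : ℕ, dof x ^ m * dof y ^ (k+1) = dof y ^ (m + k + 1) := by
  induction m with
  | zero => intro k; simp
  | succ j ih =>
    intro k
    calc dof x ^ (j+1) * dof y ^ (k+1) = dof x ^ j * (dof x * dof y ^ (k+1)) := by
          rw [pow_succ, mul_assoc]
    _ = dof x ^ j * dof y ^ ((k+1)+1) := by rw [dof_absorb]
    _ = dof y ^ (j + (k+1) + 1) := ih (k+1)
    _ = dof y ^ (j + 1 + k + 1) := by ring_nf

lemma coe_of_eq_dof (x : X) : ((FreeMonoid.of x : FreeMonoid X) : DerMon X) = dof x := rfl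

lemma dof_nf (a : DerMon X) : a = 1 ∨ ∃ x n, a = dof x ^ (n+1) := by
  induction a using Con.induction_on with
  | H w =>
    induction w using FreeMonoid.inductionOn' with
    | one => exact Or.inl rfl
    | of_mul x w ih =>
      right
      rw [Con.coe_mul, coe_of_eq_dof]
      rcases ih with h1 | ⟨z, n, hz⟩
      · exact ⟨x, 0, by rw [h1, mul_one, pow_one]⟩
      · exact ⟨z, n+1, by rw [hz, dof_absorb]⟩

end AuxMonoid

/-- With `t_{u,x} = (dx,λ_{dx}) ∘ c_u⁻¹ ∈ G_u` for `x ∈ X_u`: the torsion part of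
`G_u` is exactly `{t_{u,x} : x ∈ X_u}`, `t_{u,u}` is the identity, `x ↦ t_{u,x}` is
injective on `X_u` (so `|T(G_u)| = |X_u|`), `t_{u,x} ∘ t_{u,y} = t_{u,λ_{dx}(y)}`,
and the order of each `t_{u,x}` divides `d`. -/
theorem statement10
    {X : Type*} [Fintype X] (r : X × X → X × X) (hYB : YB r) (hidem : r ∘ r = r)
    (L : DerMon X → Equiv.Perm X)
    (hLx : ∀ x y : X, L (dof x) y = lam r x y)
    (hL1 : L 1 = 1)
    (act : Equiv.Perm X → DerMon X →* DerMon X)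
    (hact : ∀ (f : Equiv.Perm X) (x : X), act f (dof x) = dof (f x))
    (hact1 : ∀ a : DerMon X, act 1 a = a)
    (hactmul : ∀ (f g : Equiv.Perm X) (a : DerMon X), act (f * g) a = act f (act g a))
    (len : DerMon X → ℕ)
    (hlenmul : ∀ a b : DerMon X, len (a * b) = len a + len b)
    (hlenof : ∀ x : X, len (dof x) = 1)
    (hcoc : ∀ a b : DerMon X, L (a * act (L a) b) = L a * L b)
    (d : ℕ) (hd : 0 < d) (hdexp : ∀ a : DerMon X, L a ^ d = 1)
    (u : X) (hu : u ∈ Set.range (qmap L))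
    (G : Type*) [Group G] (φ : DerMon X → G)
    (hφ : IsQuotGroup (sop L act) (Su L act len u) ((dof u : DerMon X) ^ d) φ)
    (t : X → G)
    (ht : ∀ x : X, t x = φ ((dof x : DerMon X) ^ d) * (φ ((dof u : DerMon X) ^ d))⁻¹) :
    {g : G | IsOfFinOrder g} = t '' (Xu L d u) ∧
    u ∈ Xu L d u ∧ t u = 1 ∧
    Set.InjOn t (Xu L d u) ∧
    Nat.card {g : G // IsOfFinOrder g} = Nat.card (Xu L d u) ∧
    (∀ x ∈ Xu L d u, ∀ y ∈ Xu L d u, t x * t y = t (L ((dof x : DerMon X) ^ d) y)) ∧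
    (∀ x ∈ Xu L d u, t x ^ d = 1) := by
  classical
  obtain ⟨x0, hx0⟩ := hu
  obtain ⟨hhom, hinj, hsurj⟩ := hφ
  obtain ⟨d', rfl⟩ : ∃ d', d = d' + 1 := ⟨d - 1, by omega⟩
  set d := d' + 1 with hdd
  set q₀ : X → X := fun x => (L (dof x))⁻¹ x with hq₀
  have hx0' : q₀ x0 = u := hx0
  -- length facts
  have len1 : len (1 : DerMon X) = 0 := by have := hlenmul 1 1; simp at this; omega
  have lenpow : ∀ (x : X) (n : ℕ), len (dof x ^ n) = n := by
    intro x n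
    induction n with
    | zero => simpa using len1
    | succ k ih => rw [pow_succ, hlenmul, ih, hlenof]
  have powne : ∀ (x : X) (n : ℕ), dof x ^ (n+1) ≠ 1 := by
    intro x n h
    have := congrArg len h
    rw [lenpow, len1] at this
    omega
  have injpow : ∀ (x y : X) (n m : ℕ), dof x ^ (n+1) = dof y ^ (m+1) → x = y ∧ n = m := by
    intro x y n m h
    have h1 := congrArg lastHom h
    rw [lastHom_dof_pow, lastHom_dof_pow] at h1
    have h2 := congrArg len h
    rw [lenpow, lenpow] at h2
    have h3 : some x = some y := congrArg RO.val h1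
    exact ⟨Option.some_injective _ h3, by omega⟩
  -- act facts
  have actinv : ∀ (f : Equiv.Perm X) (a : DerMon X), act f (act f⁻¹ a) = a := by
    intro f a
    rw [← hactmul]
    simp [hact1]
  have actpow : ∀ (f : Equiv.Perm X) (x : X) (n : ℕ), act f (dof x ^ n) = dof (f x) ^ n := by
    intro f x n
    rw [map_pow, hact]
  -- L facts
  have Lmul : ∀ a b : DerMon X, L (a * b) = L a * L (act (L a)⁻¹ b) := by
    intro a b
    have := hcoc a (act (L a)⁻¹ b)
    rwa [actinv] at this
  have Qpow : ∀ (n : ℕ) (y : X), (L (dof y ^ n))⁻¹ y = q₀^[n] y := by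
    intro n
    induction n with
    | zero => intro y; simp [hL1]
    | succ k ih =>
      intro y
      have h1 : L (dof y ^ (k+1)) = L (dof y ^ k) * L (dof (q₀^[k] y)) := by
        rw [pow_succ, Lmul, hact, ih]
      rw [h1, mul_inv_rev, Equiv.Perm.mul_apply, ih, Function.iterate_succ_apply']
  have Lpow : ∀ (n : ℕ) (y : X), L (dof y ^ (n+1)) = L (dof y ^ n) * L (dof (q₀^[n] y)) := by
    intro n y
    rw [pow_succ, Lmul, hact, Qpow]
  -- lambda layer
  have hPr : ∀ x y : X, L (dof x) y = (r (x, y)).1 := fun x y => hLx x y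
  have hr2 : ∀ x y : X, (r (x, y)).2 = q₀ ((r (x, y)).1) := by
    intro x y
    have h := congrFun hidem (x, y)
    simp only [Function.comp_apply] at h
    have h' : r ((r (x, y)).1, (r (x, y)).2) = r (x, y) := h
    have h1 : (r ((r (x, y)).1, (r (x, y)).2)).1 = (r (x, y)).1 := congrArg Prod.fst h'
    rw [← hPr] at h1
    exact Equiv.Perm.eq_inv_iff_eq.mpr h1
  have YB1 : ∀ x y z : X,
      L (dof ((r (x, y)).1)) (L (dof (q₀ ((r (x, y)).1))) z) = L (dof x) (L (dof y) z) := by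
    intro x y z
    have h := congrFun hYB (x, y, z)
    simp only [Function.comp_apply, rl, rr] at h
    have h1 := congrArg (fun p => p.1) h
    simp only at h1
    rw [← hr2 x y, hPr ((r (x,y)).2) z, hPr ((r (x,y)).1), hPr y z, hPr x]
    exact h1
  have star : ∀ w x : X, L (dof w) * L (dof (q₀ w)) = L (dof x) * L (dof ((L (dof x))⁻¹ w)) := by
    intro w x
    apply Equiv.ext
    intro z
    have h := YB1 x ((L (dof x))⁻¹ w) z
    have hw : (r (x, (L (dof x))⁻¹ w)).1 = w := by
      rw [← hPr, Equiv.Perm.coe_inv, Equiv.apply_symm_apply]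
    rw [hw] at h
    simpa [Equiv.Perm.mul_apply] using h
  have E1 : ∀ (x w : X), q₀ ((L (dof x))⁻¹ w) = q₀ (q₀ w) := by
    intro x w
    have h := star w x
    have key : (L (dof ((L (dof x))⁻¹ w)))⁻¹ ((L (dof x))⁻¹ w)
        = (L (dof (q₀ w)))⁻¹ ((L (dof w))⁻¹ w) :=
      calc (L (dof ((L (dof x))⁻¹ w)))⁻¹ ((L (dof x))⁻¹ w)
          = (L (dof x) * L (dof ((L (dof x))⁻¹ w)))⁻¹ w := by
            rw [mul_inv_rev, Equiv.Perm.mul_apply]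
        _ = (L (dof w) * L (dof (q₀ w)))⁻¹ w := by rw [← h]
        _ = (L (dof (q₀ w)))⁻¹ ((L (dof w))⁻¹ w) := by
            rw [mul_inv_rev, Equiv.Perm.mul_apply]
    exact key
  have qshift : ∀ (n : ℕ) (x w : X), q₀^[n+1] ((L (dof x))⁻¹ w) = q₀^[n+2] w := by
    intro n x w
    rw [Function.iterate_succ_apply, E1, ← Function.iterate_succ_apply,
      ← Function.iterate_succ_apply]
  have qper : ∀ (n : ℕ) (w : X), q₀^[n+1] w = q₀ ((((L (dof u))⁻¹)^n) w) := by
    intro n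
    induction n with
    | zero => intro w; simp
    | succ k ih =>
      intro w
      rw [Function.iterate_succ_apply', ih, ← E1 u]
      congr 1
      rw [← Equiv.Perm.mul_apply, ← pow_succ']
  have qd1 : ∀ w : X, q₀^[d+1] w = q₀ w := by
    intro w
    rw [qper d w, inv_pow, hdexp (dof u), inv_one, Equiv.Perm.one_apply]
  have qstab : ∀ (k : ℕ) (w : X), 1 ≤ k → q₀^[k + d] w = q₀^[k] w := by
    intro k w hk
    obtain ⟨j, rfl⟩ : ∃ j, k = j + 1 := ⟨k - 1, by omega⟩
    have h1 : j + 1 + d = j + (d + 1) := by omega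
    rw [h1, Function.iterate_add_apply, qd1, ← Function.iterate_succ_apply]
  have qstabmul : ∀ (k : ℕ) (w : X), q₀^[d + k * d] w = q₀^[d] w := by
    intro k
    induction k with
    | zero => intro w; simp
    | succ i ih =>
      intro w
      have h1 : d + (i+1) * d = (d + i * d) + d := by ring
      rw [h1, qstab (d + i * d) w (by omega), ih]
  have starL : ∀ (n : ℕ) (x z : X),
      L (dof z ^ (n+2)) = L (dof x) * L (dof ((L (dof x))⁻¹ z) ^ (n+1)) := by
    intro n
    induction n with
    | zero =>
      intro x z
      rw [Lpow 1, pow_one, pow_one, Function.iterate_one]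
      exact star z x
    | succ k ih =>
      intro x z
      rw [show k+1+2 = (k+2)+1 from by omega, Lpow (k+2) z, ih x z, mul_assoc,
        ← qshift k x z, ← Lpow (k+1)]
  have gperAux : ∀ (j k : ℕ) (z : X),
      L (dof z ^ (k + 1 + j)) = (L (dof u))^j * L (dof ((((L (dof u))⁻¹)^j) z) ^ (k+1)) := by
    intro j
    induction j with
    | zero => intro k z; simp
    | succ i ih =>
      intro k z
      have h1 : k + 1 + (i + 1) = (k + i) + 2 := by omega
      rw [h1, starL (k + i) u z]
      have h2 : k + i + 1 = k + 1 + i := by omega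
      rw [h2, ih k ((L (dof u))⁻¹ z)]
      rw [← mul_assoc, ← pow_succ', ← Equiv.Perm.mul_apply, ← pow_succ]
  have gper : ∀ (k : ℕ) (z : X), L (dof z ^ (k + 1 + d)) = L (dof z ^ (k+1)) := by
    intro k z
    rw [gperAux d k z, inv_pow, hdexp (dof u), inv_one]
    simp
  have gsplit : ∀ (m n : ℕ) (y : X),
      L (dof y ^ (m + n)) = L (dof y ^ m) * L (dof (q₀^[m] y) ^ n) := by
    intro m n
    induction n with
    | zero => intro y; simp [hL1]
    | succ k ih =>
      intro y
      have h1 : m + (k + 1) = (m + k) + 1 := rfl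
      rw [h1, Lpow (m + k) y, ih y, Lpow k (q₀^[m] y), mul_assoc]
      congr 3
      rw [Nat.add_comm m k, Function.iterate_add_apply]
  have Tu1 : L (dof u ^ d) = 1 := by
    have h1 := gper 0 x0
    have h2 := gsplit 1 d x0
    rw [Function.iterate_one, hx0'] at h2
    rw [show (0:ℕ) + 1 + d = 1 + d from rfl] at h1
    rw [h1] at h2
    rw [pow_one] at h2
    exact (left_eq_mul.mp h2)
  have qdu : q₀^[d] u = u := by
    calc q₀^[d] u = q₀^[d] (q₀ x0) := by rw [hx0']
    _ = q₀^[d+1] x0 := (Function.iterate_succ_apply q₀ d x0).symm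
    _ = q₀ x0 := qd1 x0
    _ = u := hx0'
  have XuIff : ∀ x : X, x ∈ Xu L d u ↔ q₀^[d] x = u := by
    intro x
    constructor
    · intro h
      have h2 : L (dof x ^ d) u = x := h
      rw [← Qpow d x]
      exact Equiv.Perm.inv_eq_iff_eq.mpr h2.symm
    · intro h
      have h2 : (L (dof x ^ d))⁻¹ x = u := by rw [Qpow d x]; exact h
      show L (dof x ^ d) u = x
      rw [← h2, Equiv.Perm.coe_inv, Equiv.apply_symm_apply]
  have SuChar : ∀ (y : X) (m : ℕ), dof y ^ (m+1) ∈ Su L act len u ↔ q₀^[m+1] y = u := by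
    intro y m
    constructor
    · rintro ⟨hne, heq⟩
      rw [actpow, lenpow] at heq
      have h1 := (injpow _ _ _ _ heq).1
      rw [← Qpow (m+1) y, h1]
    · intro h
      refine ⟨powne y m, ?_⟩
      rw [actpow, lenpow, Qpow (m+1) y, h]
  have SuChar' : ∀ (y : X) (m : ℕ), 1 ≤ m → (dof y ^ m ∈ Su L act len u ↔ q₀^[m] y = u) := by
    intro y m hm
    obtain ⟨k, rfl⟩ : ∃ k, m = k + 1 := ⟨m - 1, by omega⟩
    exact SuChar y k
  have SuNF : ∀ a ∈ Su L act len u, ∃ y m, a = dof y ^ (m+1) ∧ q₀^[m+1] y = u := by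
    intro a ha
    rcases dof_nf a with rfl | ⟨y, m, rfl⟩
    · exact absurd rfl ha.1
    · exact ⟨y, m, rfl, (SuChar y m).mp ha⟩
  have qpeel : ∀ (n : ℕ) (x' z : X), q₀^[n+2] (L (dof x') z) = q₀^[n+1] z := by
    intro n x' z
    have h := E1 x' (L (dof x') z)
    rw [Equiv.Perm.coe_inv, Equiv.symm_apply_apply] at h
    calc q₀^[n+2] (L (dof x') z) = q₀^[n] (q₀ (q₀ (L (dof x') z))) := by
          rw [Function.iterate_succ_apply, Function.iterate_succ_apply]
    _ = q₀^[n] (q₀ z) := by rw [← h]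
    _ = q₀^[n+1] z := (Function.iterate_succ_apply q₀ n z).symm
  have qT : ∀ (n m : ℕ) (y z : X), q₀^[(m+1)+n] (L (dof z ^ n) y) = q₀^[m+1] y := by
    intro n
    induction n with
    | zero => intro m y z; rw [pow_zero, hL1]; simp
    | succ k ih =>
      intro m y z
      rw [Lpow k z, Equiv.Perm.mul_apply]
      have h1 : (m+1) + (k+1) = ((m+1)+1) + k := by omega
      rw [h1, ih (m+1) (L (dof (q₀^[k] z)) y) z]
      exact qpeel m (q₀^[k] z) y
  have closure : ∀ x ∈ Xu L d u, ∀ y ∈ Xu L d u, L (dof x ^ d) y ∈ Xu L d u := by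
    intro x hx y hy
    rw [XuIff] at hy ⊢
    have h1 : q₀^[(d'+1)+(d'+1)] (L (dof x ^ (d'+1)) y) = q₀^[d'+1] y := qT (d'+1) d' y x
    have h2 : q₀^[(d'+1)+(d'+1)] (L (dof x ^ (d'+1)) y) = q₀^[d'+1] (L (dof x ^ (d'+1)) y) :=
      qstab (d'+1) _ (by omega)
    rw [← hdd] at h1 h2
    rw [← h2, h1, hy]
  -- group layer
  have cSu : dof u ^ d ∈ Su L act len u := (SuChar' u d (by omega)).mpr qdu
  have huXu : u ∈ Xu L d u := (XuIff u).mpr qdu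
  have AmemXu : ∀ x ∈ Xu L d u, dof x ^ d ∈ Su L act len u := fun x hx =>
    (SuChar' x d (by omega)).mpr ((XuIff x).mp hx)
  have Lus : ∀ (y : X) (n : ℕ), q₀^[n] y = u → L (dof y ^ n) u = y := by
    intro y n h
    have h2 : (L (dof y ^ n))⁻¹ y = u := by rw [Qpow]; exact h
    rw [← h2, Equiv.Perm.coe_inv, Equiv.apply_symm_apply]
  have sopGen : ∀ (y z : X) (M n : ℕ),
      sop L act (dof y ^ M) (dof z ^ (n+1)) = dof (L (dof y ^ M) z) ^ (M + n + 1) := by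
    intro y z M n
    show dof y ^ M * act (L (dof y ^ M)) (dof z ^ (n+1)) = _
    rw [actpow, dof_pow_mul]
  have sopac : ∀ (y : X) (M : ℕ), 1 ≤ M → q₀^[M] y = u →
      sop L act (dof y ^ M) (dof u ^ d) = dof y ^ (M + d) := by
    intro y M hM h
    have hd2 : dof u ^ d = dof u ^ (d' + 1) := by rw [hdd]
    rw [hd2, sopGen y u M d', Lus y M h, show M + d' + 1 = M + d from by omega]
  have sopca : ∀ (y : X) (M : ℕ),
      sop L act (dof u ^ d) (dof y ^ (M+1)) = dof y ^ (d + M + 1) := by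
    intro y M
    show dof u ^ d * act (L (dof u ^ d)) (dof y ^ (M+1)) = _
    rw [Tu1, hact1]
    exact dof_pow_mul u y d M
  have ccomm : ∀ a ∈ Su L act len u, sop L act a (dof u ^ d) = sop L act (dof u ^ d) a := by
    intro a ha
    obtain ⟨y, m, rfl, hy⟩ := SuNF a ha
    rw [sopca y m, sopac y (m+1) (by omega) hy, show (m+1)+d = d+m+1 from by omega]
  have centr : ∀ g : G, Commute (φ (dof u ^ d)) g := by
    intro g
    obtain ⟨a, ha, n, rfl⟩ := hsurj g
    have h1 : Commute (φ (dof u ^ d)) (φ a) := by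
      show φ (dof u ^ d) * φ a = φ a * φ (dof u ^ d)
      rw [← hhom _ cSu _ ha, ← hhom _ ha _ cSu, ccomm a ha]
    exact h1.mul_right ((Commute.refl (φ (dof u ^ d))).inv_right.pow_right n)
  have multSu : ∀ x ∈ Xu L d u, ∀ y ∈ Xu L d u,
      φ (dof x ^ d) * φ (dof y ^ d) = φ (dof (L (dof x ^ d) y) ^ d) * φ (dof u ^ d) := by
    intro x hx y hy
    have hz := closure x hx y hy
    have h1 : sop L act (dof x ^ d) (dof y ^ d) = dof (L (dof x ^ d) y) ^ (d + d) := by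
      have hy2 : dof y ^ d = dof y ^ (d' + 1) := by rw [hdd]
      rw [hy2, sopGen x y d d', show d + d' + 1 = d + d from by omega]
    have h2 : sop L act (dof (L (dof x ^ d) y) ^ d) (dof u ^ d)
        = dof (L (dof x ^ d) y) ^ (d + d) := by
      rw [sopac _ d (by omega) ((XuIff _).mp hz)]
    rw [← hhom _ (AmemXu x hx) _ (AmemXu y hy), h1, ← h2, hhom _ (AmemXu _ hz) _ cSu]
  have tmul : ∀ x ∈ Xu L d u, ∀ y ∈ Xu L d u, t x * t y = t (L (dof x ^ d) y) := by
    intro x hx y hy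
    rw [ht, ht, ht]
    have hc : (φ (dof u ^ d))⁻¹ * φ (dof y ^ d) = φ (dof y ^ d) * (φ (dof u ^ d))⁻¹ :=
      ((centr (φ (dof y ^ d))).inv_left).eq
    calc φ (dof x ^ d) * (φ (dof u ^ d))⁻¹ * (φ (dof y ^ d) * (φ (dof u ^ d))⁻¹)
        = φ (dof x ^ d) * ((φ (dof u ^ d))⁻¹ * φ (dof y ^ d)) * (φ (dof u ^ d))⁻¹ := by
          group
      _ = φ (dof x ^ d) * (φ (dof y ^ d) * (φ (dof u ^ d))⁻¹) * (φ (dof u ^ d))⁻¹ := by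
          rw [hc]
      _ = (φ (dof x ^ d) * φ (dof y ^ d)) * (φ (dof u ^ d))⁻¹ * (φ (dof u ^ d))⁻¹ := by
          group
      _ = (φ (dof (L (dof x ^ d) y) ^ d) * φ (dof u ^ d)) * (φ (dof u ^ d))⁻¹
            * (φ (dof u ^ d))⁻¹ := by rw [multSu x hx y hy]
      _ = φ (dof (L (dof x ^ d) y) ^ d) * (φ (dof u ^ d))⁻¹ := by group
  have tu1 : t u = 1 := by rw [ht]; simp
  have titer : ∀ x ∈ Xu L d u, ∀ k : ℕ,
      ((L (dof x ^ d))^k) x ∈ Xu L d u ∧ t x ^ (k+1) = t (((L (dof x ^ d))^k) x) := by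
    intro x hx k
    induction k with
    | zero => exact ⟨by simpa using hx, by simp⟩
    | succ i ih =>
      obtain ⟨hmem, heq⟩ := ih
      have hstep : ((L (dof x ^ d))^(i+1)) x = L (dof x ^ d) (((L (dof x ^ d))^i) x) := by
        rw [pow_succ', Equiv.Perm.mul_apply]
      constructor
      · rw [hstep]; exact closure x hx _ hmem
      · rw [pow_succ', heq, tmul x hx _ hmem, ← hstep]
  have tfin : ∀ x ∈ Xu L d u, t x ^ d = 1 := by
    intro x hx
    obtain ⟨hmem, heq⟩ := titer x hx d'
    have hT : (L (dof x ^ d))^(d'+1) = 1 := by rw [← hdd]; exact hdexp _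
    have hTi : (L (dof x ^ d))^d' = (L (dof x ^ d))⁻¹ :=
      (inv_eq_of_mul_eq_one_right (by rw [← pow_succ']; exact hT)).symm
    have hu' : ((L (dof x ^ d))^d') x = u := by
      rw [hTi, Qpow d x]
      exact (XuIff x).mp hx
    rw [hdd, heq, hu', tu1]
  have qreach : ∀ (j : ℕ) (y : X), q₀^[d] y = u → q₀^[d + j*d] y = u := by
    intro j y h
    rw [qstabmul j y, h]
  have phiAc : ∀ y ∈ Xu L d u, ∀ j : ℕ,
      φ (dof y ^ (d + j*d)) = φ (dof y ^ d) * φ (dof u ^ d) ^ j := by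
    intro y hy j
    induction j with
    | zero => simp
    | succ i ih =>
      have hyd := (XuIff y).mp hy
      have hmem : dof y ^ (d + i*d) ∈ Su L act len u :=
        (SuChar' y (d + i*d) (by omega)).mpr (qreach i y hyd)
      have hsop : sop L act (dof y ^ (d + i*d)) (dof u ^ d) = dof y ^ (d + (i+1)*d) := by
        rw [sopac y (d + i*d) (by omega) (qreach i y hyd),
          show (d + i*d) + d = d + (i+1)*d from by ring]
      calc φ (dof y ^ (d + (i+1)*d)) = φ (sop L act (dof y ^ (d+i*d)) (dof u ^ d)) := by
            rw [hsop]
        _ = φ (dof y ^ (d+i*d)) * φ (dof u ^ d) := hhom _ hmem _ cSu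
        _ = φ (dof y ^ d) * φ (dof u ^ d) ^ i * φ (dof u ^ d) := by rw [ih]
        _ = φ (dof y ^ d) * φ (dof u ^ d) ^ (i+1) := by rw [mul_assoc, ← pow_succ]
  have phicpow : ∀ j : ℕ, φ (dof u ^ (d + j*d)) = φ (dof u ^ d) ^ (j+1) := by
    intro j
    rw [phiAc u huXu j, ← pow_succ']
  have phiApow : ∀ (y : X) (m : ℕ), q₀^[m+1] y = u → ∀ e : ℕ,
      ∃ z : X, φ (dof y ^ (m+1)) ^ (e+1) = φ (dof z ^ ((e+1)*(m+1)))
        ∧ q₀^[(e+1)*(m+1)] z = u := by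
    intro y m hy e
    induction e with
    | zero => exact ⟨y, by simp, by simpa using hy⟩
    | succ i ih =>
      obtain ⟨z, hz1, hz2⟩ := ih
      refine ⟨L (dof z ^ ((i+1)*(m+1))) y, ?_, ?_⟩
      · have hsop : sop L act (dof z ^ ((i+1)*(m+1))) (dof y ^ (m+1))
            = dof (L (dof z ^ ((i+1)*(m+1))) y) ^ ((i+2)*(m+1)) := by
          rw [sopGen z y ((i+1)*(m+1)) m, show (i+1)*(m+1) + m + 1 = (i+2)*(m+1) from by ring]
        have hzmem : dof z ^ ((i+1)*(m+1)) ∈ Su L act len u :=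
          (SuChar' z ((i+1)*(m+1)) (Nat.one_le_iff_ne_zero.mpr (Nat.mul_ne_zero (by omega) (by omega)))).mpr hz2
        rw [pow_succ, hz1, ← hhom _ hzmem _ ((SuChar y m).mpr hy), hsop]
      · have hq := qT ((i+1)*(m+1)) m y z
        rw [show (i+2)*(m+1) = (m+1) + (i+1)*(m+1) from by ring, hq]
        exact hy
  have setEq : {g : G | IsOfFinOrder g} = t '' (Xu L d u) := by
    ext g
    simp only [Set.mem_setOf_eq, Set.mem_image]
    constructor
    · intro hg
      obtain ⟨a, ha, n, hgeq⟩ := hsurj g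
      obtain ⟨y, m, rfl, hy⟩ := SuNF a ha
      obtain ⟨e, he, hpow⟩ := isOfFinOrder_iff_pow_eq_one.mp hg
      obtain ⟨e', rfl⟩ : ∃ e', e = e' + 1 := ⟨e - 1, by omega⟩
      have hcomm : Commute (φ (dof y ^ (m+1))) ((φ (dof u ^ d))⁻¹ ^ n) :=
        ((centr (φ (dof y ^ (m+1)))).symm.inv_right).pow_right n
      rw [hgeq, hcomm.mul_pow] at hpow
      have heq : φ (dof y ^ (m+1)) ^ (e'+1) = φ (dof u ^ d) ^ (n*(e'+1)) := by
        have h2 : ((φ (dof u ^ d))⁻¹ ^ n)^(e'+1) = (φ (dof u ^ d) ^ (n*(e'+1)))⁻¹ := by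
          rw [inv_pow, inv_pow, ← pow_mul]
        rw [h2] at hpow
        exact mul_inv_eq_one.mp hpow
      obtain ⟨z, hz1, hz2⟩ := phiApow y m hy e'
      rw [hz1] at heq
      have hEz : 1 ≤ (e'+1)*(m+1) :=
        Nat.one_le_iff_ne_zero.mpr (Nat.mul_ne_zero (by omega) (by omega))
      have hzmem : dof z ^ ((e'+1)*(m+1)) ∈ Su L act len u := (SuChar' z _ hEz).mpr hz2
      cases n with
      | zero =>
        exfalso
        rw [Nat.zero_mul, pow_zero] at heq
        have hsopzc : sop L act (dof z ^ ((e'+1)*(m+1))) (dof u ^ d)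
            = dof z ^ ((e'+1)*(m+1) + d) := sopac z _ hEz hz2
        have hmem2 : dof z ^ ((e'+1)*(m+1) + d) ∈ Su L act len u :=
          (SuChar' z _ (by omega)).mpr (by rw [qstab _ z hEz, hz2])
        have h6 : φ (dof z ^ ((e'+1)*(m+1) + d)) = φ (dof u ^ d) := by
          rw [← hsopzc, hhom _ hzmem _ cSu, heq, one_mul]
        have h7 := hinj _ hmem2 _ cSu h6
        have hlen := congrArg len h7
        rw [lenpow, lenpow] at hlen
        omega
      | succ n' =>
        have hprodpos : 1 ≤ (n'+1)*(e'+1) :=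
          Nat.one_le_iff_ne_zero.mpr (Nat.mul_ne_zero (by omega) (by omega))
        have hj : φ (dof u ^ d) ^ ((n'+1)*(e'+1))
            = φ (dof u ^ (d + ((n'+1)*(e'+1) - 1)*d)) := by
          rw [phicpow ((n'+1)*(e'+1) - 1),
            show ((n'+1)*(e'+1) - 1) + 1 = (n'+1)*(e'+1) from by omega]
        rw [hj] at heq
        have humem : dof u ^ (d + ((n'+1)*(e'+1) - 1)*d) ∈ Su L act len u :=
          (SuChar' u _ (by omega)).mpr (qreach _ u qdu)
        have hE := hinj _ hzmem _ humem heq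
        have hlen := congrArg len hE
        rw [lenpow, lenpow] at hlen
        have hm1 : m + 1 = (n'+1)*d := by
          have h3 : (e'+1)*(m+1) = (e'+1)*((n'+1)*d) := by
            calc (e'+1)*(m+1) = d + ((n'+1)*(e'+1) - 1)*d := hlen
            _ = (((n'+1)*(e'+1) - 1) + 1)*d := by ring
            _ = ((n'+1)*(e'+1))*d := by rw [show ((n'+1)*(e'+1) - 1) + 1 = (n'+1)*(e'+1) from by omega]
            _ = (e'+1)*((n'+1)*d) := by ring
          exact Nat.eq_of_mul_eq_mul_left (by omega) h3
        have hyXu : y ∈ Xu L d u := by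
          rw [XuIff]
          have h8 : q₀^[m+1] y = u := hy
          rw [hm1, show (n'+1)*d = d + n'*d from by ring] at h8
          have h4 : q₀^[d + n'*d] y = q₀^[d] y := qstabmul n' y
          rw [← h4]
          exact h8
        refine ⟨y, hyXu, ?_⟩
        rw [ht, hgeq]
        have h5 : φ (dof y ^ (m+1)) = φ (dof y ^ d) * φ (dof u ^ d) ^ n' := by
          rw [hm1, show (n'+1)*d = d + n'*d from by ring]
          exact phiAc y hyXu n'
        rw [h5, inv_pow, mul_assoc]
        congr 1
        have hcm : φ (dof u ^ d) ^ n' * (φ (dof u ^ d))⁻¹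
            = (φ (dof u ^ d))⁻¹ * φ (dof u ^ d) ^ n' :=
          (((Commute.refl (φ (dof u ^ d))).pow_left n').inv_right).eq
        rw [pow_succ (φ (dof u ^ d)) n', mul_inv_rev, ← mul_assoc, hcm,
          mul_assoc, mul_inv_cancel, mul_one]
    · rintro ⟨x, hx, rfl⟩
      exact isOfFinOrder_iff_pow_eq_one.mpr ⟨d, hd, tfin x hx⟩
  have injOnT : Set.InjOn t (Xu L d u) := by
    intro x hx y hy hxy
    rw [ht, ht] at hxy
    have h1 : φ (dof x ^ d) = φ (dof y ^ d) := mul_right_cancel hxy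
    have h2 := hinj _ (AmemXu x hx) _ (AmemXu y hy) h1
    have h3 : dof x ^ (d'+1) = dof y ^ (d'+1) := by rw [← hdd]; exact h2
    exact (injpow x y d' d' h3).1
  have hcard : Nat.card {g : G // IsOfFinOrder g} = Nat.card (Xu L d u) := by
    calc Nat.card {g : G // IsOfFinOrder g} = Nat.card ↥{g : G | IsOfFinOrder g} := rfl
    _ = Nat.card ↥(t '' (Xu L d u)) := by rw [setEq]
    _ = Nat.card (Xu L d u) := Nat.card_image_of_injOn injOnT
  exact ⟨setEq, huXu, tu1, injOnT, hcard, tmul, tfin⟩
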